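/- arXiv:2310.06677 — 3 statements merged into one kernel-verified Lean document; each statement's English description precedes it below -/
import Mathlib

section
/- The Fourier transform of the kernel K_{λ,t}(u) := (1/π)·(2αλ²/(u² + (2αλ²)²))·(2αλ²t·sin(tu)/(tu) − cos(tu) + e^{−2αλ²t}) is given by K̂_{λ,t}(q) = (2π)^{−1/2}·(1 − e^{−2αλ²(t−|q|)}) for |q| ≤ t, and K̂_{λ,t}(q) = 0 for |q| > t. -/
open MeasureTheory Real

/-- The kernel `K_{λ,t}` from the relaxation formula. -/
noncomputable def Kkernel (α lam t u : ℝ) : ℝ :=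
  (1 / Real.pi) * (2 * α * lam ^ 2 / (u ^ 2 + (2 * α * lam ^ 2) ^ 2)) *
    (2 * α * lam ^ 2 * t * (if u = 0 then 1 else Real.sin (t * u) / (t * u)) -
      Real.cos (t * u) + Real.exp (-2 * α * lam ^ 2 * t))

/-- Fourier transform with the convention `f̂(q) = (2π)^{-1/2} ∫ f(u) e^{-iqu} du`. -/
noncomputable def fourierT (f : ℝ → ℝ) (q : ℝ) : ℂ :=
  ((Real.sqrt (2 * Real.pi))⁻¹ : ℝ) *
    ∫ u : ℝ, (f u : ℂ) * Complex.exp (-Complex.I * (q : ℂ) * (u : ℂ))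

/-! The claimed transform `g(q) = 1 - e^{-a(t-|q|)}` (`a = 2αλ²`, cut off at `|q| = t`) is continuous,
even and compactly supported, so its inverse Fourier transform is the elementary integral
`(2π)⁻¹ ∫₀ᵗ 2 cos(uq) (1 - e^{-a(t-q)}) dq`, which evaluates to `K_{λ,t}(u)`. Since `K_{λ,t}` decays
like `u⁻²` it is integrable, and Fourier inversion gives `K̂_{λ,t} = g`. Mathlib's `𝓕` uses the
kernel `e^{-2πiuv}`, so `fourierT K q = (2π)^{-1/2} 𝓕 K (q / 2π)`. -/

open FourierTransform intervalIntegral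

noncomputable def relaxKernel (a t u : ℝ) : ℝ :=
  π⁻¹ * (a / (u ^ 2 + a ^ 2)) * (a * t * sinc (t * u) - cos (t * u) + exp (-(a * t)))

/-- The function `g` above, written with `min` so that its continuity is evident. -/
noncomputable def relaxSymbol (a t q : ℝ) : ℝ :=
  1 - exp (-(a * (t - min |q| t)))

lemma Kkernel_eq_relaxKernel (α lam : ℝ) {t : ℝ} (ht : t ≠ 0) :
    Kkernel α lam t = relaxKernel (2 * α * lam ^ 2) t := by
  ext u
  have hsinc : (if u = 0 then 1 else sin (t * u) / (t * u)) = sinc (t * u) := by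
    simp [sinc_apply, ht]
  rw [Kkernel, relaxKernel, hsinc]
  ring_nf

lemma fourierT_eq_fourier (f : ℝ → ℝ) (q : ℝ) :
    fourierT f q = ((√(2 * π))⁻¹ : ℝ) * 𝓕 (fun u ↦ (f u : ℂ)) (q / (2 * π)) := by
  rw [fourierT, Real.fourier_real_eq_integral_exp_smul]
  congr 1
  refine integral_congr_ae (Filter.Eventually.of_forall fun u ↦ ?_)
  simp only [smul_eq_mul]
  rw [mul_comm]
  congr 2
  push_cast
  field_simp

lemma continuous_relaxSymbol (a t : ℝ) : Continuous (relaxSymbol a t) := by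
  unfold relaxSymbol; fun_prop

lemma relaxSymbol_neg (a t q : ℝ) : relaxSymbol a t (-q) = relaxSymbol a t q := by
  simp [relaxSymbol]

lemma relaxSymbol_of_abs_le {a t q : ℝ} (h : |q| ≤ t) :
    relaxSymbol a t q = 1 - exp (-(a * (t - |q|))) := by
  rw [relaxSymbol, min_eq_left h]

lemma relaxSymbol_of_le_abs {a t q : ℝ} (h : t ≤ |q|) : relaxSymbol a t q = 0 := by
  simp [relaxSymbol, min_eq_right h]

lemma integral_cos_mul_eq_mul_sinc (u t : ℝ) :
    ∫ q in (0 : ℝ)..t, cos (u * q) = t * sinc (t * u) := by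
  rcases eq_or_ne u 0 with rfl | hu
  · simp
  rcases eq_or_ne t 0 with rfl | ht
  · simp
  rw [integral_comp_mul_left (fun x ↦ cos x) hu, integral_cos, sinc_of_ne_zero (by positivity)]
  simp only [mul_zero, sin_zero, sub_zero, smul_eq_mul]
  field_simp

lemma integral_cos_mul_mul_exp {a : ℝ} (ha : a ≠ 0) (u t : ℝ) :
    ∫ q in (0 : ℝ)..t, cos (u * q) * exp (a * (q - t)) =
      (a * cos (t * u) + u * sin (t * u) - a * exp (-(a * t))) / (a ^ 2 + u ^ 2) := by
  have hd : a ^ 2 + u ^ 2 ≠ 0 := by positivity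
  have hderiv : ∀ q ∈ Set.uIcc (0 : ℝ) t, HasDerivAt
      (fun q ↦ exp (a * (q - t)) * (a * cos (u * q) + u * sin (u * q)) / (a ^ 2 + u ^ 2))
      (cos (u * q) * exp (a * (q - t))) q := by
    intro q _
    have hlin : HasDerivAt (fun q : ℝ ↦ u * q) u q := by
      simpa using (hasDerivAt_id q).const_mul u
    have hexp : HasDerivAt (fun q : ℝ ↦ a * (q - t)) a q := by
      simpa using ((hasDerivAt_id q).sub_const t).const_mul a
    refine ((hexp.exp.fun_mul ((hlin.cos.const_mul a).fun_add (hlin.sin.const_mul u))).div_const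
      (a ^ 2 + u ^ 2)).congr_deriv ?_
    field_simp
    ring
  rw [integral_eq_sub_of_hasDerivAt hderiv ((by fun_prop : Continuous _).intervalIntegrable _ _)]
  simp only [mul_zero, cos_zero, sin_zero, zero_sub]
  rw [mul_comm t u, sub_self, mul_zero, exp_zero, one_mul, mul_neg]
  ring

lemma integral_two_cos_mul_relaxSymbol {a t : ℝ} (ha : a ≠ 0) (ht : 0 ≤ t) (u : ℝ) :
    ∫ q in (0 : ℝ)..t, 2 * cos (u * q) * relaxSymbol a t q = 2 * π * relaxKernel a t u := by
  have hsymbol : Set.EqOn (fun q ↦ 2 * cos (u * q) * relaxSymbol a t q)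
      (fun q ↦ 2 * cos (u * q) - 2 * (cos (u * q) * exp (a * (q - t)))) (Set.uIcc 0 t) := by
    intro q hq
    rw [Set.uIcc_of_le ht] at hq
    simp only [relaxSymbol_of_abs_le (abs_of_nonneg hq.1 ▸ hq.2), abs_of_nonneg hq.1]
    ring_nf
  have hsin : sin (t * u) = t * u * sinc (t * u) := by
    rcases eq_or_ne (t * u) 0 with h | h
    · simp [h]
    · rw [sinc_of_ne_zero h, mul_div_cancel₀ _ h]
  have hd : a ^ 2 + u ^ 2 ≠ 0 := by positivity
  rw [integral_congr hsymbol,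
    intervalIntegral.integral_sub (Continuous.intervalIntegrable (by fun_prop) _ _)
      (Continuous.intervalIntegrable (by fun_prop) _ _),
    intervalIntegral.integral_const_mul, intervalIntegral.integral_const_mul,
    integral_cos_mul_eq_mul_sinc, integral_cos_mul_mul_exp ha, relaxKernel, hsin]
  field_simp
  ring

lemma integral_exp_mul_I_of_even {g : ℝ → ℝ} (hg : Function.Even g) (hcont : Continuous g)
    (u t : ℝ) :
    ∫ q in -t..t, Complex.exp (↑(q * u) * Complex.I) * g q =
      ↑(∫ q in (0 : ℝ)..t, 2 * cos (u * q) * g q) := by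
  set H : ℝ → ℂ := fun q ↦ Complex.exp (↑(q * u) * Complex.I) * g q
  have hH : ∀ b c : ℝ, IntervalIntegrable H volume b c := fun b c ↦
    (by fun_prop : Continuous H).intervalIntegrable b c
  have hneg : ∫ q in -t..0, H q = ∫ q in (0 : ℝ)..t, H (-q) := by
    rw [integral_comp_neg]; simp
  rw [← integral_add_adjacent_intervals (hH (-t) 0) (hH 0 t), hneg,
    ← integral_add ((by fun_prop : Continuous fun q ↦ H (-q)).intervalIntegrable 0 t) (hH 0 t),
    ← integral_ofReal]
  refine integral_congr fun q _ ↦ ?_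
  simp only [H, hg q]
  push_cast
  rw [Complex.two_cos]
  ring_nf

lemma fourierInv_comp_two_pi_mul (g : ℝ → ℂ) (u : ℝ) :
    𝓕⁻ (fun v ↦ g (2 * π * v)) u =
      (2 * π)⁻¹ * ∫ q, Complex.exp (↑(q * u) * Complex.I) * g q := by
  rw [Real.fourierInv_eq']
  have hscale := Measure.integral_comp_mul_left
    (fun q ↦ Complex.exp (↑(q * u) * Complex.I) * g q) (2 * π)
  rw [abs_of_pos (by positivity), Complex.real_smul] at hscale
  rw [← hscale]
  congr 1
  ext v
  simp only [smul_eq_mul, Real.inner_apply, mul_assoc]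

lemma fourierInv_relaxSymbol {a t : ℝ} (ha : a ≠ 0) (ht : 0 ≤ t) (u : ℝ) :
    𝓕⁻ (fun v ↦ (relaxSymbol a t (2 * π * v) : ℂ)) u = relaxKernel a t u := by
  have hsupport : Function.support
      (fun q ↦ Complex.exp (↑(q * u) * Complex.I) * relaxSymbol a t q) ⊆ Set.Ioc (-t) t := by
    intro q hq
    have hlt : |q| < t := by
      by_contra! hle
      simp [relaxSymbol_of_le_abs hle] at hq
    exact ⟨(abs_lt.mp hlt).1, (abs_lt.mp hlt).2.le⟩
  rw [fourierInv_comp_two_pi_mul (fun q ↦ (relaxSymbol a t q : ℂ)),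
    ← integral_eq_integral_of_support_subset hsupport,
    integral_exp_mul_I_of_even (relaxSymbol_neg a t) (continuous_relaxSymbol a t),
    integral_two_cos_mul_relaxSymbol ha ht]
  push_cast
  field_simp

lemma abs_relaxKernel_le (a t u : ℝ) :
    |relaxKernel a t u| ≤ π⁻¹ * |a| * (|a * t| + 1 + exp (-(a * t))) * (u ^ 2 + a ^ 2)⁻¹ := by
  have hsinc : |a * t * sinc (t * u)| ≤ |a * t| := by
    rw [abs_mul]
    exact mul_le_of_le_one_right (abs_nonneg _) (abs_sinc_le_one _)
  have hbracket : |a * t * sinc (t * u) - cos (t * u) + exp (-(a * t))| ≤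
      |a * t| + 1 + exp (-(a * t)) := by
    calc _ ≤ |a * t * sinc (t * u)| + |cos (t * u)| + |exp (-(a * t))| :=
          (abs_add_le _ _).trans (by gcongr; exact abs_sub _ _)
      _ ≤ _ := by rw [abs_of_pos (exp_pos _)]; linarith [abs_cos_le_one (t * u)]
  rw [relaxKernel, abs_mul, abs_mul, abs_div, abs_of_pos (inv_pos.mpr pi_pos),
    abs_of_nonneg (by positivity : 0 ≤ u ^ 2 + a ^ 2)]
  calc _ ≤ π⁻¹ * (|a| / (u ^ 2 + a ^ 2)) * (|a * t| + 1 + exp (-(a * t))) := by gcongr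
    _ = _ := by ring

lemma integrable_relaxKernel {a : ℝ} (ha : a ≠ 0) (t : ℝ) : Integrable (relaxKernel a t) := by
  have hdecay : Integrable fun u : ℝ ↦ (u ^ 2 + a ^ 2)⁻¹ := by
    refine ((integrable_inv_one_add_sq.comp_div ha).const_mul (a ^ 2)⁻¹).congr
      (Filter.Eventually.of_forall fun u ↦ ?_)
    field_simp
    ring
  exact (hdecay.const_mul (π⁻¹ * |a| * (|a * t| + 1 + exp (-(a * t))))).mono'
    (by unfold relaxKernel; fun_prop) (Filter.Eventually.of_forall (abs_relaxKernel_le a t))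

lemma hasCompactSupport_relaxSymbol (a t : ℝ) : HasCompactSupport (relaxSymbol a t) := by
  refine HasCompactSupport.intro (isCompact_Icc (a := -t) (b := t)) fun q hq ↦ ?_
  exact relaxSymbol_of_le_abs (not_le.mp (mt abs_le.mp hq)).le

lemma fourier_relaxKernel {a t : ℝ} (ha : a ≠ 0) (ht : 0 ≤ t) (v : ℝ) :
    𝓕 (fun u ↦ (relaxKernel a t u : ℂ)) v = relaxSymbol a t (2 * π * v) := by
  set G : ℝ → ℂ := fun v ↦ (relaxSymbol a t (2 * π * v) : ℂ)
  have hinv : 𝓕⁻ G = fun u ↦ (relaxKernel a t u : ℂ) := funext (fourierInv_relaxSymbol ha ht)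
  have hG_cont : Continuous G := by
    have := continuous_relaxSymbol a t
    fun_prop
  have hG_int : Integrable G := by
    refine hG_cont.integrable_of_hasCompactSupport ?_
    exact (((hasCompactSupport_relaxSymbol a t).comp_smul (by positivity : 2 * π ≠ 0)).comp_left
      Complex.ofReal_zero)
  have hFG : 𝓕 G = fun u ↦ (relaxKernel a t (-u) : ℂ) := by
    ext u
    rw [← congr_fun hinv (-u), Real.fourierInv_eq_fourier_neg, neg_neg]
  have hFG_int : Integrable (𝓕 G) := by
    rw [hFG]
    exact ((integrable_relaxKernel ha t).ofReal (𝕜 := ℂ)).comp_neg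
  rw [← hinv]
  exact congr_fun (hG_cont.fourier_fourierInv_eq hG_int hFG_int) v

/-- The Fourier transform of `K_{λ,t}` equals `(2π)^{-1/2}(1 - e^{-2αλ²(t-|q|)})` for
`|q| ≤ t` and vanishes for `|q| > t`. -/
theorem statement3 (α lam t : ℝ) (hα : 0 < α) (hlam : 0 < lam) (ht : 0 < t) (q : ℝ) :
    (|q| ≤ t → fourierT (Kkernel α lam t) q =
      ((Real.sqrt (2 * Real.pi))⁻¹ : ℝ) *
        (1 - Complex.exp (-2 * α * lam ^ 2 * (t - |q|)))) ∧
    (t < |q| → fourierT (Kkernel α lam t) q = 0) := by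
  have ha : 2 * α * lam ^ 2 ≠ 0 := by positivity
  have hfourier : fourierT (Kkernel α lam t) q =
      ((√(2 * π))⁻¹ : ℝ) * (relaxSymbol (2 * α * lam ^ 2) t q : ℂ) := by
    rw [fourierT_eq_fourier, Kkernel_eq_relaxKernel α lam ht.ne', fourier_relaxKernel ha ht.le,
      mul_div_cancel₀ q (by positivity)]
  refine ⟨fun hq ↦ ?_, fun hq ↦ ?_⟩
  · rw [hfourier, relaxSymbol_of_abs_le hq]
    push_cast
    ring_nf
  · rw [hfourier, relaxSymbol_of_le_abs hq.le]
    simp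
end

section
/- Let M(z) solve −M(z)^{−1} = z − H₀ + λ²⟨M(z)⟩ with Im M(z)·Im z > 0 for Im z > 0. Then the derivative of m(z) := ⟨M(z)⟩ satisfies m′(z) = ⟨M(z)²⟩ / (1 − λ²⟨M(z)²⟩), and |1 − λ²⟨M(z)²⟩| ≥ 2λ²⟨(Im M(z))²⟩, so that |m′(z)| ≤ 1/(2λ⁴⟨(Im M(z))²⟩). -/
open Matrix
open scoped ComplexOrder

/-!
Write `M(w) = (H₀ - g(w))⁻¹` with `g(w) = w + λ²m(w)`. Differentiating the resolvent gives
`m' = g'(z)⟨M²⟩ = (1 + λ²m')⟨M²⟩`. Since `H₀` is Hermitian, `M - M* = (g - ḡ) M*M` (the Ward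
identity), so `Im M = Im g · M*M`; taking traces, `Im m = (Im z + λ² Im m)⟨M*M⟩` with `Im m > 0`,
which forces `λ²⟨M*M⟩ < 1`. Expanding `(Im M)²` gives `Re⟨M²⟩ = ⟨M*M⟩ - 2⟨(Im M)²⟩`, whence
`Re(1 - λ²⟨M²⟩) ≥ 2λ²⟨(Im M)²⟩`, and Cauchy–Schwarz `|⟨M²⟩| ≤ ⟨M*M⟩ < λ⁻²` bounds the numerator.
-/

theorem HasDerivAt.ringInverse {𝕜 R : Type*} [NontriviallyNormedField 𝕜] [NormedRing R]
    [HasSummableGeomSeries R] [NormedAlgebra 𝕜 R] {h : 𝕜 → R} {h' : R} {z : 𝕜}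
    (hh : HasDerivAt h h' z) (hz : IsUnit (h z)) :
    HasDerivAt (fun w => Ring.inverse (h w))
      (-(Ring.inverse (h z) * h' * Ring.inverse (h z))) z := by
  obtain ⟨u, hu⟩ := hz
  have hinv : HasFDerivAt Ring.inverse _ (h z) := hu ▸ hasFDerivAt_ringInverse (𝕜 := 𝕜) u
  simpa [← hu, Function.comp_def] using hinv.comp_hasDerivAt z hh

theorem Complex.two_mul_I_inv_mul_sub_conj (w : ℂ) :
    ((2 : ℂ) * Complex.I)⁻¹ * (w - (starRingEnd ℂ) w) = (w.im : ℂ) := by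
  rw [Complex.sub_conj]
  field_simp
  push_cast
  ring

namespace Matrix

variable {n : Type*} [Fintype n]

section Resolvent

attribute [local instance] Matrix.linftyOpNormedRing Matrix.linftyOpNormedAlgebra

theorem hasDerivAt_trace_of_eventuallyEq_inv_sub_smul_one {𝕜 : Type*} [NontriviallyNormedField 𝕜]
    [CompleteSpace 𝕜] [DecidableEq n] {H : Matrix n n 𝕜} {R : 𝕜 → Matrix n n 𝕜} {g : 𝕜 → 𝕜}
    {c z : 𝕜} (hg : HasDerivAt g c z) (hu : IsUnit (H - g z • 1).det)
    (hR : ∀ᶠ w in nhds z, (H - g w • 1)⁻¹ = R w) :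
    HasDerivAt (fun w => (R w).trace) (c * (R z * R z).trace) z := by
  -- instance search does not find completeness for the `linfty` operator norm by itself
  have : HasSummableGeomSeries (Matrix n n 𝕜) :=
    @instHasSummableGeomSeriesOfCompleteSpace _ _ (FiniteDimensional.complete 𝕜 _)
  have hinv := ((hasDerivAt_const z H).sub (hg.smul_const (1 : Matrix n n 𝕜))).ringInverse
    ((isUnit_iff_isUnit_det _).mpr hu)
  have htrace := (traceLinearMap n 𝕜 𝕜).toContinuousLinearMap.hasFDerivAt.comp_hasDerivAt z hinv
  simp only [Function.comp_def, ← nonsing_inv_eq_ringInverse] at htrace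
  refine (htrace.congr_of_eventuallyEq (hR.mono fun w hw => by simp [hw])).congr_deriv ?_
  show trace (-((H - g z • 1)⁻¹ * (0 - c • 1) * (H - g z • 1)⁻¹)) = _
  simp [trace_smul, hR.self_of_nhds]

end Resolvent

theorem norm_trace_mul_self_le {𝕜 : Type*} [RCLike 𝕜] [DecidableEq n] (A : Matrix n n 𝕜) :
    ‖(A * A).trace‖ ≤ RCLike.re (Aᴴ * A).trace := by
  -- Cauchy–Schwarz for the Frobenius inner product `⟪X, Y⟫ = tr (Y * Xᴴ)`, applied to `Aᴴ` and `A`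
  let _ := (1 : Matrix n n 𝕜).toMatrixNormedAddCommGroup PosDef.one
  let _ := (1 : Matrix n n 𝕜).toMatrixInnerProductSpace PosDef.one.posSemidef
  have hnorm (B : Matrix n n 𝕜) : ‖B‖ ^ 2 = RCLike.re (B * Bᴴ).trace := by
    have : inner 𝕜 B B = (B * 1 * Bᴴ).trace := rfl
    rw [← inner_self_eq_norm_sq (𝕜 := 𝕜), this, Matrix.mul_one]
  have hinner : inner 𝕜 Aᴴ A = (A * 1 * Aᴴᴴ).trace := rfl
  rw [Matrix.mul_one, conjTranspose_conjTranspose] at hinner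
  have hnorm_conj : ‖Aᴴ‖ = ‖A‖ := by
    rw [← sq_eq_sq₀ (norm_nonneg _) (norm_nonneg _), hnorm, hnorm, trace_mul_comm,
      conjTranspose_conjTranspose]
  calc ‖(A * A).trace‖ = ‖inner 𝕜 Aᴴ A‖ := by rw [hinner]
    _ ≤ ‖Aᴴ‖ * ‖A‖ := norm_inner_le_norm _ _
    _ = RCLike.re (Aᴴ * A).trace := by rw [hnorm_conj, ← sq, hnorm, trace_mul_comm]

theorem PosDef.trace_mul_self_pos {𝕜 : Type*} [RCLike 𝕜] [DecidableEq n] [Nonempty n]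
    {S : Matrix n n 𝕜} (hS : S.PosDef) : 0 < (S * S).trace := by
  have h := PosDef.conjTranspose_mul_self S (mulVec_injective_iff_isUnit.mpr hS.isUnit)
  rw [hS.isHermitian.eq] at h
  exact h.trace_pos

-- Mathlib's `imaginaryPart` has the same value but lands in `selfAdjoint`.
noncomputable def imPart (A : Matrix n n ℂ) : Matrix n n ℂ := ((2 : ℂ) * Complex.I)⁻¹ • (A - Aᴴ)

theorem trace_imPart (A : Matrix n n ℂ) : (imPart A).trace = (A.trace.im : ℂ) := by
  rw [imPart, trace_smul, trace_sub, trace_conjTranspose, smul_eq_mul]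
  exact Complex.two_mul_I_inv_mul_sub_conj _

theorem re_trace_imPart_mul_self (A : Matrix n n ℂ) :
    ((imPart A * imPart A).trace).re = ((Aᴴ * A).trace.re - (A * A).trace.re) / 2 := by
  have hsq : imPart A * imPart A = -(4 : ℂ)⁻¹ • (A * A - A * Aᴴ - Aᴴ * A + Aᴴ * Aᴴ) := by
    rw [imPart, smul_mul_smul_comm]
    congr 1
    · field_simp
      norm_num [Complex.I_sq]
    · noncomm_ring
  rw [hsq, trace_smul, trace_add, trace_sub, trace_sub, trace_mul_comm A Aᴴ,
    ← conjTranspose_mul, trace_conjTranspose]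
  simp [Complex.mul_re]
  ring

theorem inv_sub_conjTranspose_inv [DecidableEq n] {H : Matrix n n ℂ} (hH : H.IsHermitian)
    {d : ℂ} (hd : IsUnit (H - d • 1).det) :
    (H - d • 1)⁻¹ - (H - d • 1)⁻¹ᴴ =
      (d - (starRingEnd ℂ) d) • ((H - d • 1)⁻¹ᴴ * (H - d • 1)⁻¹) := by
  set X := H - d • 1
  have hXH : Xᴴ = H - (starRingEnd ℂ) d • 1 := by
    simp [X, conjTranspose_sub, conjTranspose_smul, hH.eq]
  have hdetH : IsUnit Xᴴ.det := by rw [det_conjTranspose]; exact hd.star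
  calc X⁻¹ - X⁻¹ᴴ = X⁻¹ᴴ * (Xᴴ - X) * X⁻¹ := by
        rw [conjTranspose_nonsing_inv, Matrix.mul_sub, Matrix.sub_mul, nonsing_inv_mul _ hdetH,
          Matrix.mul_assoc, mul_nonsing_inv _ hd, Matrix.one_mul, Matrix.mul_one]
    _ = _ := by
        rw [hXH, show H - (starRingEnd ℂ) d • 1 - X = (d - (starRingEnd ℂ) d) • 1 by
          simp only [X, sub_smul]; abel]
        simp

theorem imPart_inv_sub_smul_one [DecidableEq n] {H : Matrix n n ℂ} (hH : H.IsHermitian) {d : ℂ}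
    (hd : IsUnit (H - d • 1).det) :
    imPart (H - d • 1)⁻¹ = (d.im : ℂ) • ((H - d • 1)⁻¹ᴴ * (H - d • 1)⁻¹) := by
  rw [imPart, inv_sub_conjTranspose_inv hH hd, smul_smul, Complex.two_mul_I_inv_mul_sub_conj]

theorem eq_inv_sub_smul_one_of_neg_inv_eq [DecidableEq n] {M H : Matrix n n ℂ} {w c : ℂ}
    (hM : IsUnit M.det) (h : -M⁻¹ = w • 1 - H + c • 1) :
    IsUnit (H - (w + c) • 1).det ∧ (H - (w + c) • 1)⁻¹ = M := by
  have hinv : M⁻¹ = H - (w + c) • 1 := by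
    rw [← neg_neg M⁻¹, h, add_smul]
    abel
  rw [← hinv]
  exact ⟨isUnit_nonsing_inv_det M hM, nonsing_inv_nonsing_inv M hM⟩

theorem im_trace_inv_sub_smul_one [DecidableEq n] {H : Matrix n n ℂ} (hH : H.IsHermitian)
    {d : ℂ} (hd : IsUnit (H - d • 1).det) :
    ((H - d • 1)⁻¹).trace.im = d.im * ((H - d • 1)⁻¹ᴴ * (H - d • 1)⁻¹).trace.re := by
  simpa [trace_imPart, trace_smul, Complex.re_ofReal_mul] using
    congrArg (fun B => B.trace.re) (imPart_inv_sub_smul_one hH hd)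

theorem im_trace_pos_of_posDef_imPart [Nonempty n] {A : Matrix n n ℂ} (hA : (imPart A).PosDef) :
    0 < A.trace.im := by
  simpa [trace_imPart] using hA.trace_pos

theorem re_trace_imPart_mul_self_pos [DecidableEq n] [Nonempty n] {A : Matrix n n ℂ}
    (hA : (imPart A).PosDef) : 0 < (imPart A * imPart A).trace.re :=
  (Complex.pos_iff.mp hA.trace_mul_self_pos).1

end Matrix

theorem two_mul_sq_mul_le_norm_one_sub {lam p v : ℝ} {q : ℂ} (hre : q.re = p - 2 * v)
    (hp : lam ^ 2 * p ≤ 1) : 2 * lam ^ 2 * v ≤ ‖1 - (lam : ℂ) ^ 2 * q‖ := by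
  refine le_trans ?_ (Complex.re_le_norm _)
  have : (1 - (lam : ℂ) ^ 2 * q).re = 1 - lam ^ 2 * q.re := by
    rw [← Complex.ofReal_pow, Complex.sub_re, Complex.one_re, Complex.re_ofReal_mul]
  rw [this, hre]
  linarith

theorem norm_div_one_sub_le {lam p v : ℝ} {q : ℂ} (hlam : 0 < lam) (hv : 0 < v) (hq : ‖q‖ ≤ p)
    (hre : q.re = p - 2 * v) (hp : lam ^ 2 * p ≤ 1) :
    ‖q / (1 - (lam : ℂ) ^ 2 * q)‖ ≤ 1 / (2 * lam ^ 4 * v) := by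
  have hq' : ‖q‖ ≤ 1 / lam ^ 2 := by
    rw [le_div_iff₀ (by positivity)]
    nlinarith
  calc ‖q / (1 - (lam : ℂ) ^ 2 * q)‖ = ‖q‖ / ‖1 - (lam : ℂ) ^ 2 * q‖ := norm_div _ _
    _ ≤ (1 / lam ^ 2) / (2 * lam ^ 2 * v) :=
      div_le_div₀ (by positivity) hq' (by positivity) (two_mul_sq_mul_le_norm_one_sub hre hp)
    _ = 1 / (2 * lam ^ 4 * v) := by
      field_simp

theorem mul_lt_one_of_eq_add_mul_mul {y t κ P : ℝ} (hy : 0 < y) (ht : 0 < t) (hκ : 0 ≤ κ)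
    (h : t = (y + κ * t) * P) : κ * P < 1 := by
  have hP : 0 < P := pos_of_mul_pos_right (h ▸ ht) (by positivity)
  have : κ * P * t < t := by nlinarith [mul_pos hy hP]
  nlinarith

theorem dyson_derivative_bounds {lam p v : ℝ} {q m' : ℂ} (hlam : 0 < lam) (hv : 0 < v)
    (hq : ‖q‖ ≤ p) (hre : q.re = p - 2 * v) (hp : lam ^ 2 * p ≤ 1)
    (hm' : m' = (1 + (lam : ℂ) ^ 2 * m') * q) :
    m' = q / (1 - (lam : ℂ) ^ 2 * q) ∧ 2 * lam ^ 2 * v ≤ ‖1 - (lam : ℂ) ^ 2 * q‖ ∧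
      ‖m'‖ ≤ 1 / (2 * lam ^ 4 * v) := by
  have hden := two_mul_sq_mul_le_norm_one_sub hre hp
  have hne : 1 - (lam : ℂ) ^ 2 * q ≠ 0 := norm_pos_iff.mp (lt_of_lt_of_le (by positivity) hden)
  have hm'q : m' = q / (1 - (lam : ℂ) ^ 2 * q) := by
    rw [eq_div_iff hne]
    linear_combination hm'
  exact ⟨hm'q, hden, hm'q ▸ norm_div_one_sub_le hlam hv hq hre hp⟩

/-- If `M(z)` solves the matrix Dyson equation `−M(z)⁻¹ = z − H₀ + λ²⟨M(z)⟩` with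
`Im M(z)` positive definite throughout the upper half-plane, and `m(z) := ⟨M(z)⟩` has
derivative `m′` at a point `z` with `Im z > 0`, then
`m′ = ⟨M²⟩/(1 − λ²⟨M²⟩)`, `|1 − λ²⟨M²⟩| ≥ 2λ²⟨(Im M)²⟩`, and hence
`|m′| ≤ 1/(2λ⁴⟨(Im M)²⟩)`. -/
theorem statement11 (N : ℕ) (hN : 0 < N) (H₀ : Matrix (Fin N) (Fin N) ℂ)
    (hH₀ : H₀.IsHermitian) (lam : ℝ) (hlam : 0 < lam)
    (M : ℂ → Matrix (Fin N) (Fin N) ℂ)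
    (hMinv : ∀ w : ℂ, 0 < w.im → IsUnit (M w).det)
    (hMDE : ∀ w : ℂ, 0 < w.im →
      -(M w)⁻¹ = w • (1 : Matrix (Fin N) (Fin N) ℂ) - H₀ +
        (((lam : ℂ) ^ 2) * ((N : ℂ)⁻¹ * (M w).trace)) • (1 : Matrix (Fin N) (Fin N) ℂ))
    (hImM : ∀ w : ℂ, 0 < w.im → (((2 : ℂ) * Complex.I)⁻¹ • (M w - (M w)ᴴ)).PosDef)
    (z : ℂ) (hz : 0 < z.im) (m' : ℂ)
    (hm' : HasDerivAt (fun w => (N : ℂ)⁻¹ * (M w).trace) m' z) :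
    m' = ((N : ℂ)⁻¹ * (M z * M z).trace) / (1 - (lam : ℂ) ^ 2 * ((N : ℂ)⁻¹ * (M z * M z).trace)) ∧
    2 * lam ^ 2 * ((N : ℝ)⁻¹ *
        (((((2 : ℂ) * Complex.I)⁻¹ • (M z - (M z)ᴴ)) *
          (((2 : ℂ) * Complex.I)⁻¹ • (M z - (M z)ᴴ))).trace).re) ≤
      ‖(1 - (lam : ℂ) ^ 2 * ((N : ℂ)⁻¹ * (M z * M z).trace))‖ ∧
    ‖m'‖ ≤
      1 / (2 * lam ^ 4 * ((N : ℝ)⁻¹ *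
        (((((2 : ℂ) * Complex.I)⁻¹ • (M z - (M z)ᴴ)) *
          (((2 : ℂ) * Complex.I)⁻¹ • (M z - (M z)ᴴ))).trace).re)) := by
  have : Nonempty (Fin N) := ⟨⟨0, hN⟩⟩
  have hNinv : ((N : ℂ))⁻¹ = (((N : ℝ)⁻¹ : ℝ) : ℂ) := by push_cast; rfl
  set g : ℂ → ℂ := fun w => w + (lam : ℂ) ^ 2 * ((N : ℂ)⁻¹ * (M w).trace)
  have hres (w : ℂ) (hw : 0 < w.im) : IsUnit (H₀ - g w • 1).det ∧ (H₀ - g w • 1)⁻¹ = M w :=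
    eq_inv_sub_smul_one_of_neg_inv_eq (hMinv w hw) (hMDE w hw)
  obtain ⟨hunit, hinv⟩ := hres z hz
  have hm'eq : m' = (1 + (lam : ℂ) ^ 2 * m') * ((N : ℂ)⁻¹ * (M z * M z).trace) := by
    have hg : HasDerivAt g (1 + (lam : ℂ) ^ 2 * m') z := (hasDerivAt_id z).add (hm'.const_mul _)
    have hR : ∀ᶠ w in nhds z, (H₀ - g w • 1)⁻¹ = M w := by
      filter_upwards [(isOpen_lt continuous_const Complex.continuous_im).mem_nhds hz] with w hw
      exact (hres w hw).2
    exact (hm'.unique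
      ((hasDerivAt_trace_of_eventuallyEq_inv_sub_smul_one hg hunit hR).const_mul _)).trans
      (by ring)
  have hward := im_trace_inv_sub_smul_one hH₀ hunit
  have hgz : (g z).im = z.im + lam ^ 2 * (N : ℝ)⁻¹ * (M z).trace.im := by
    simp only [g, hNinv, ← Complex.ofReal_pow, Complex.add_im, Complex.im_ofReal_mul, mul_assoc]
  rw [hinv, hgz] at hward
  have hp := mul_lt_one_of_eq_add_mul_mul hz (im_trace_pos_of_posDef_imPart (hImM z hz))
    (by positivity) hward
  refine dyson_derivative_bounds (p := (N : ℝ)⁻¹ * ((M z)ᴴ * M z).trace.re) hlam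
    (mul_pos (by positivity) (re_trace_imPart_mul_self_pos (hImM z hz))) ?_ ?_
    (by rw [← mul_assoc]; exact hp.le) hm'eq
  · simp only [norm_mul, norm_inv, Complex.norm_natCast]
    gcongr
    exact norm_trace_mul_self_le (M z)
  · rw [← imPart]
    simp only [hNinv, Complex.re_ofReal_mul, re_trace_imPart_mul_self]
    ring
end

section
/- Subtracting two instances of the matrix Dyson equation −M_λ(z)^{−1} = z − H₀ + λ²⟨M_λ(z)⟩ at spectral parameters z₁ ≠ z₂ (both nonreal) yields the identity M_λ(z₁)M_λ(z₂)/(1 − λ²⟨M_λ(z₁)M_λ(z₂)⟩) = (M_λ(z₁) − M_λ(z₂))/(z₁ − z₂), provided 1 − λ²⟨M_λ(z₁)M_λ(z₂)⟩ ≠ 0. -/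
open Matrix

/-- Subtracting two instances of the matrix Dyson equation
`−M_λ(z)⁻¹ = z − H₀ + λ²⟨M_λ(z)⟩` at nonreal `z₁ ≠ z₂` gives
`M₁M₂/(1 − λ²⟨M₁M₂⟩) = (M₁ − M₂)/(z₁ − z₂)`, provided `1 − λ²⟨M₁M₂⟩ ≠ 0`. -/
theorem statement12 (N : ℕ) (hN : 0 < N) (H₀ M₁ M₂ : Matrix (Fin N) (Fin N) ℂ)
    (hH₀ : H₀.IsHermitian) (lam : ℝ) (hlam : 0 < lam)
    (z₁ z₂ : ℂ) (hz₁ : z₁.im ≠ 0) (hz₂ : z₂.im ≠ 0) (hne : z₁ ≠ z₂)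
    (hM₁inv : IsUnit M₁.det) (hM₂inv : IsUnit M₂.det)
    (hMDE₁ : -M₁⁻¹ = z₁ • (1 : Matrix (Fin N) (Fin N) ℂ) - H₀ +
      (((lam : ℂ) ^ 2) * ((N : ℂ)⁻¹ * M₁.trace)) • (1 : Matrix (Fin N) (Fin N) ℂ))
    (hMDE₂ : -M₂⁻¹ = z₂ • (1 : Matrix (Fin N) (Fin N) ℂ) - H₀ +
      (((lam : ℂ) ^ 2) * ((N : ℂ)⁻¹ * M₂.trace)) • (1 : Matrix (Fin N) (Fin N) ℂ))
    (hdenom : 1 - (lam : ℂ) ^ 2 * ((N : ℂ)⁻¹ * (M₁ * M₂).trace) ≠ 0) :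
    (1 - (lam : ℂ) ^ 2 * ((N : ℂ)⁻¹ * (M₁ * M₂).trace))⁻¹ • (M₁ * M₂) =
      (z₁ - z₂)⁻¹ • (M₁ - M₂) := by
  set c : ℂ := (z₁ - z₂) + (lam : ℂ) ^ 2 *
      ((N : ℂ)⁻¹ * M₁.trace - (N : ℂ)⁻¹ * M₂.trace) with hc
  have hdiff : M₂⁻¹ - M₁⁻¹ = c • (1 : Matrix (Fin N) (Fin N) ℂ) := by
    have h0 : M₂⁻¹ - M₁⁻¹ = (-M₁⁻¹) - (-M₂⁻¹) := by abel
    rw [h0, hMDE₁, hMDE₂, hc]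
    module
  have hkey : M₁ - M₂ = c • (M₁ * M₂) := by
    have h2 : M₁ * (M₂⁻¹ - M₁⁻¹) * M₂ = M₁ - M₂ := by
      rw [Matrix.mul_sub, Matrix.sub_mul, Matrix.mul_nonsing_inv _ hM₁inv,
        Matrix.mul_assoc, Matrix.nonsing_inv_mul _ hM₂inv, Matrix.one_mul,
        Matrix.mul_one]
    rw [← h2, hdiff]
    simp [Matrix.mul_smul, Matrix.smul_mul]
  have htr : M₁.trace - M₂.trace = c * (M₁ * M₂).trace := by
    have := congrArg Matrix.trace hkey
    simpa [Matrix.trace_sub, Matrix.trace_smul, smul_eq_mul] using this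
  have hNne : (N : ℂ) ≠ 0 := Nat.cast_ne_zero.mpr hN.ne'
  have hcd : c * (1 - (lam : ℂ) ^ 2 * ((N : ℂ)⁻¹ * (M₁ * M₂).trace)) = z₁ - z₂ := by
    linear_combination hc + (lam : ℂ) ^ 2 * (N : ℂ)⁻¹ * htr
  have hz : z₁ - z₂ ≠ 0 := sub_ne_zero_of_ne hne
  have hcne : c ≠ 0 := by
    intro h; rw [h, zero_mul] at hcd; exact hz hcd.symm
  rw [hkey, smul_smul]
  congr 1
  have h1 : ((z₁ - z₂)⁻¹ * c) * (1 - (lam : ℂ) ^ 2 * ((N : ℂ)⁻¹ * (M₁ * M₂).trace)) = 1 := by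
    rw [mul_assoc, hcd, inv_mul_cancel₀ hz]
  exact inv_eq_of_mul_eq_one_left h1
end
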